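/- If for every s ∈ S and a ∈ A there exists U ∈ T(S) such that row_t♯(U) = row_b(s)(a), then the observation table is closed, i.e., for every U ∈ T(S) and a ∈ A there exists U' ∈ T(S) with row_t♯(U') = row_b♯(U)(a). -/

import Mathlib

/-- A monad on the category of sets, given by an endofunctor `T` with unit `pure` (η)
and multiplication `mult` (μ), satisfying functoriality, naturality and the monad laws. -/
structure SetMonad where
  T : Type → Type
  map : {X Y : Type} → (X → Y) → T X → T Y
  pure : {X : Type} → X → T X
  mult : {X : Type} → T (T X) → T X
  map_id : ∀ {X : Type} (t : T X), map id t = t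
  map_comp : ∀ {X Y Z : Type} (g : Y → Z) (f : X → Y) (t : T X),
    map (g ∘ f) t = map g (map f t)
  pure_natural : ∀ {X Y : Type} (f : X → Y) (x : X), map f (pure x) = pure (f x)
  mult_natural : ∀ {X Y : Type} (f : X → Y) (t : T (T X)),
    map f (mult t) = mult (map (map f) t)
  mult_pure : ∀ {X : Type} (t : T X), mult (pure t) = t
  mult_map_pure : ∀ {X : Type} (t : T X), mult (map pure t) = t
  mult_assoc : ∀ {X : Type} (t : T (T (T X))), mult (mult t) = mult (map mult t)

/-- An Eilenberg-Moore algebra `(carrier, str)` for the monad `M`. -/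
structure AlgOver (M : SetMonad) where
  carrier : Type
  str : M.T carrier → carrier
  str_pure : ∀ x, str (M.pure x) = x
  str_mult : ∀ t, str (M.mult t) = str (M.map str t)

/-- `f` is a `T`-algebra homomorphism from `X` to `Y`: `f ∘ h = k ∘ T f`. -/
def IsHom (M : SetMonad) (X Y : AlgOver M) (f : X.carrier → Y.carrier) : Prop :=
  ∀ t : M.T X.carrier, f (X.str t) = Y.str (M.map f t)

/-- The free `T`-algebra `(T U, μ_U)` on a set `U`. -/
def freeAlg (M : SetMonad) (U : Type) : AlgOver M where
  carrier := M.T U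
  str := M.mult
  str_pure := M.mult_pure
  str_mult := M.mult_assoc

/-- The free `T`-extension `g♯ = v ∘ T g : T U → V` of a function `g : U → V`
into a `T`-algebra `(V, v)`. -/
def extAlg (M : SetMonad) {U : Type} (V : AlgOver M) (g : U → V.carrier) :
    M.T U → V.carrier :=
  fun t => V.str (M.map g t)

/-- The pointwise `T`-algebra structure on `V^A` for a `T`-algebra `V`. -/
def powAlg (M : SetMonad) (A : Type) (V : AlgOver M) : AlgOver M where
  carrier := A → V.carrier
  str := fun t a => V.str (M.map (fun g => g a) t)
  str_pure := by
    intro x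
    funext a
    show V.str (M.map (fun g => g a) (M.pure x)) = x a
    rw [M.pure_natural]
    exact V.str_pure _
  str_mult := by
    intro t
    funext a
    show V.str (M.map (fun g => g a) (M.mult t)) =
      V.str (M.map (fun g => g a) (M.map (fun t a => V.str (M.map (fun g => g a) t)) t))
    rw [M.mult_natural, V.str_mult, ← M.map_comp, ← M.map_comp]
    rfl

/-- The top part of the observation table: `row_t : S → O^E`, `row_t(s)(e) = L(se)`. -/
def rowT (A : Type) {Oc : Type} (L : List A → Oc) (S E : Set (List A)) :
    ↥S → ↥E → Oc :=
  fun s e => L (s.1 ++ e.1)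

/-- The bottom part of the observation table: `row_b : S → (O^E)^A`,
`row_b(s)(a)(e) = L(sae)`. -/
def rowB (A : Type) {Oc : Type} (L : List A → Oc) (S E : Set (List A)) :
    ↥S → A → ↥E → Oc :=
  fun s a e => L (s.1 ++ a :: e.1)

/-- The free `T`-extension `row_t♯ : T(S) → O^E`. -/
def rowTs (M : SetMonad) (A : Type) (O : AlgOver M) (L : List A → O.carrier)
    (S E : Set (List A)) : M.T ↥S → ↥E → O.carrier :=
  extAlg M (powAlg M (↥E) O) (rowT A L S E)

/-- The free `T`-extension `row_b♯ : T(S) → (O^E)^A`. -/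
def rowBs (M : SetMonad) (A : Type) (O : AlgOver M) (L : List A → O.carrier)
    (S E : Set (List A)) : M.T ↥S → A → ↥E → O.carrier :=
  extAlg M (powAlg M A (powAlg M (↥E) O)) (rowB A L S E)

/-! The image of a free extension `g♯` is a subalgebra, so it contains `y♯(t)` as soon as it
contains every generator `y u`: choosing `g♯(k u) = y u`, the witness is `μ (T k t)`. -/

section

variable {M : SetMonad}

theorem isHom_extAlg {U : Type} (V : AlgOver M) (g : U → V.carrier) :
    IsHom M (freeAlg M U) V (extAlg M V g) := by
  intro (t : M.T (M.T U))
  change V.str (M.map g (M.mult t)) = V.str (M.map (fun s => V.str (M.map g s)) t)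
  rw [M.mult_natural, V.str_mult, ← M.map_comp]
  rfl

theorem IsHom.comp_extAlg {U : Type} {X Y : AlgOver M} {φ : X.carrier → Y.carrier}
    (hφ : IsHom M X Y φ) (g : U → X.carrier) (t : M.T U) :
    φ (extAlg M X g t) = extAlg M Y (φ ∘ g) t := by
  rw [extAlg, hφ, ← M.map_comp]
  rfl

theorem isHom_powAlg_eval (A : Type) (V : AlgOver M) (a : A) :
    IsHom M (powAlg M A V) V (fun f => f a) :=
  fun _ => rfl

theorem extAlg_powAlg_apply {U A : Type} (V : AlgOver M) (g : U → A → V.carrier)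
    (t : M.T U) (a : A) :
    extAlg M (powAlg M A V) g t a = extAlg M V (fun u => g u a) t :=
  IsHom.comp_extAlg (isHom_powAlg_eval A V a) g t

theorem extAlg_mult_map {U W : Type} (V : AlgOver M) (g : U → V.carrier)
    (k : W → M.T U) (t : M.T W) :
    extAlg M V g (M.mult (M.map k t)) = extAlg M V (extAlg M V g ∘ k) t :=
  IsHom.comp_extAlg (isHom_extAlg V g) k t

theorem exists_extAlg_eq_extAlg {U W : Type} (V : AlgOver M) (g : U → V.carrier)
    (y : W → V.carrier) (hy : ∀ w, ∃ s, extAlg M V g s = y w) (t : M.T W) :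
    ∃ s, extAlg M V g s = extAlg M V y t := by
  choose k hk using hy
  refine ⟨M.mult (M.map k t), ?_⟩
  rw [extAlg_mult_map]
  congr 1
  exact funext hk

end

theorem stmt5_general (M : SetMonad) (A : Type) (O : AlgOver M)
    (L : List A → O.carrier) (S E : Set (List A))
    (h : ∀ (s : ↥S) (a : A), ∃ U : M.T ↥S,
      rowTs M A O L S E U = rowB A L S E s a) :
    ∀ (U : M.T ↥S) (a : A), ∃ U' : M.T ↥S,
      rowTs M A O L S E U' = rowBs M A O L S E U a := by
  intro U a
  obtain ⟨U', hU'⟩ := exists_extAlg_eq_extAlg (powAlg M (↥E) O) (rowT A L S E)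
    (fun s => rowB A L S E s a) (fun s => h s a) U
  exact ⟨U', hU'.trans (extAlg_powAlg_apply (powAlg M (↥E) O) (rowB A L S E) U a).symm⟩

/-- if every one-letter extension of a row of `S` equals `row_t♯(U)` for
some `U ∈ T(S)`, then the table is closed. -/
theorem stmt5 (M : SetMonad) (A : Type) [Finite A] (O : AlgOver M)
    (L : List A → O.carrier) (S E : Set (List A)) (hSfin : S.Finite) (hEfin : E.Finite)
    (hSe : [] ∈ S) (hEe : [] ∈ E)
    (h : ∀ (s : ↥S) (a : A), ∃ U : M.T ↥S,
      rowTs M A O L S E U = rowB A L S E s a) :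
    ∀ (U : M.T ↥S) (a : A), ∃ U' : M.T ↥S,
      rowTs M A O L S E U' = rowBs M A O L S E U a :=
  stmt5_general M A O L S E h
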